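/- arXiv:2509.24058 — 2 statements merged into one kernel-verified Lean document; each statement's English description precedes it below -/
import Mathlib

section
/- Let λ > 0, n fixed, and suppose e^{α_N} ≤ C/N for all large N and some constant C (rare-event intercept bound). Then any maximizer β_N of the penalized objective satisfies ‖β_N‖² ≤ (2/λ)(Ne^{α_N})(1 + n/N), and hence limsup_{N→∞} ‖β_N‖² ≤ 2C/λ < ∞; i.e., the penalized CAV estimators remain bounded as N → ∞. -/
/-!
Comparing the penalized objective at the maximizer `β` with its value at `0`: the `x`-terms can
only decrease when moving away from `0`, because `u ↦ log σ u` is concave and the deviations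
`⟪β, x i - x̄⟫` sum to zero (Jensen); the `z`-terms are always `≤ 0`, while at `0` they equal
`-N log (1 + e^α) ≥ -N e^α`. Hence `λ/2 ‖β‖² ≤ N e^α`, and `N e^α ≤ C` eventually.
-/

open Real Filter
open scoped RealInnerProductSpace

lemma hasDerivAt_log_sigmoid (u : ℝ) :
    HasDerivAt (fun u => log (sigmoid u)) (1 - sigmoid u) u := by
  convert (hasDerivAt_sigmoid u).log (sigmoid_pos u).ne' using 1
  field_simp [(sigmoid_pos u).ne']

lemma concaveOn_log_sigmoid : ConcaveOn ℝ Set.univ (fun u => log (sigmoid u)) := by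
  have hderiv : deriv (fun u => log (sigmoid u)) = fun u => 1 - sigmoid u :=
    funext fun u => (hasDerivAt_log_sigmoid u).deriv
  refine Antitone.concaveOn_univ_of_deriv
    (fun u => (hasDerivAt_log_sigmoid u).differentiableAt) ?_
  rw [hderiv]
  exact fun _ _ hab => sub_le_sub_left (sigmoid_monotone hab) 1

lemma log_sigmoid_nonpos (u : ℝ) : log (sigmoid u) ≤ 0 :=
  log_nonpos (sigmoid_nonneg u) (sigmoid_le_one u)

lemma neg_log_sigmoid_neg_le_exp (u : ℝ) : -log (sigmoid (-u)) ≤ exp u := by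
  rw [sigmoid_def, neg_neg, log_inv, neg_neg]
  linarith [log_le_sub_one_of_pos (by positivity : 0 < 1 + exp u)]

lemma ConcaveOn.sum_le_card_mul_of_sum_eq_zero {ι : Type*} {f : ℝ → ℝ}
    (hf : ConcaveOn ℝ Set.univ f) (s : Finset ι) (a : ℝ) {t : ι → ℝ}
    (ht : ∑ i ∈ s, t i = 0) : ∑ i ∈ s, f (a + t i) ≤ s.card * f a := by
  rcases s.eq_empty_or_nonempty with rfl | hs
  · simp
  have hcard : (0 : ℝ) < s.card := by exact_mod_cast hs.card_pos
  have hJ := hf.le_map_sum (t := s) (w := fun _ => (s.card : ℝ)⁻¹) (p := fun i => a + t i)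
    (fun _ _ => by positivity) (by simp [hcard.ne']) (fun _ _ => Set.mem_univ _)
  have hmean : ∑ i ∈ s, (s.card : ℝ)⁻¹ • (a + t i) = a := by
    rw [← Finset.smul_sum, Finset.sum_add_distrib, ht, Finset.sum_const, nsmul_eq_mul,
      add_zero, smul_eq_mul]
    field_simp
  rw [hmean, ← Finset.smul_sum, smul_eq_mul] at hJ
  exact (inv_mul_le_iff₀ hcard).1 hJ

lemma sum_sub_inv_card_smul_sum {ι E : Type*} [Fintype ι] [AddCommGroup E] [Module ℝ E]
    (x : ι → E) : ∑ i, (x i - (Fintype.card ι : ℝ)⁻¹ • ∑ j, x j) = 0 := by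
  rcases isEmpty_or_nonempty ι with hι | hι
  · simp
  have hcard : (Fintype.card ι : ℝ) ≠ 0 := by positivity
  rw [Finset.sum_sub_distrib, Finset.sum_const, Finset.card_univ, ← Nat.cast_smul_eq_nsmul ℝ,
    smul_smul, mul_inv_cancel₀ hcard, one_smul, sub_self]

section PenalizedLogit

variable {ι κ E : Type*} [Fintype ι] [Fintype κ]
  [NormedAddCommGroup E] [InnerProductSpace ℝ E]

/-- Ridge-penalized logistic log-likelihood: `x` are the positive cases, `z` the negative ones,
covariates are centred at `c`. -/
noncomputable def penalizedLogitObjective (lam : ℝ) (x : ι → E) (z : κ → E) (c : E)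
    (a : ℝ) (b : E) : ℝ :=
  (∑ i, log (sigmoid (a + ⟪b, x i - c⟫))) + (∑ j, log (1 - sigmoid (a + ⟪b, z j - c⟫)))
    - lam / 2 * ‖b‖ ^ 2

lemma penalizedLogitObjective_zero (lam : ℝ) (x : ι → E) (z : κ → E) (c : E) (a : ℝ) :
    penalizedLogitObjective lam x z c a 0
      = Fintype.card ι * log (sigmoid a) + Fintype.card κ * log (sigmoid (-a)) := by
  simp [penalizedLogitObjective, sigmoid_neg]

lemma half_mul_sq_norm_le_of_penalizedLogitObjective_zero_le (lam : ℝ) (x : ι → E)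
    (z : κ → E) {c : E} (hc : ∑ i, (x i - c) = 0) (a : ℝ) {b : E}
    (hb : penalizedLogitObjective lam x z c a 0 ≤ penalizedLogitObjective lam x z c a b) :
    lam / 2 * ‖b‖ ^ 2 ≤ Fintype.card κ * exp a := by
  have hx : ∑ i, log (sigmoid (a + ⟪b, x i - c⟫)) ≤ Fintype.card ι * log (sigmoid a) :=
    concaveOn_log_sigmoid.sum_le_card_mul_of_sum_eq_zero _ a
      (by rw [← inner_sum, hc, inner_zero_right])
  have hz : ∑ j, log (1 - sigmoid (a + ⟪b, z j - c⟫)) ≤ 0 :=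
    Finset.sum_nonpos fun j _ => by rw [← sigmoid_neg]; exact log_sigmoid_nonpos _
  have hsoftplus : Fintype.card κ * -log (sigmoid (-a)) ≤ Fintype.card κ * exp a :=
    mul_le_mul_of_nonneg_left (neg_log_sigmoid_neg_le_exp a) (Nat.cast_nonneg _)
  rw [penalizedLogitObjective_zero, penalizedLogitObjective] at hb
  linarith

end PenalizedLogit

/-- Boundedness of penalized CAV estimators: under the rare-event intercept
bound `e^{α_N} ≤ C/N`, any maximizer of the penalized objective satisfies
`‖β_N‖² ≤ (2/λ)(N e^{α_N})(1 + n/N)`, hence `limsup ‖β_N‖² ≤ 2C/λ < ∞`. -/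
theorem stmt_12 {d n : ℕ} (lam C : ℝ) (hlam : 0 < lam)
    (x : Fin n → EuclideanSpace ℝ (Fin d))
    (xbar : EuclideanSpace ℝ (Fin d)) (hxbar : xbar = (n : ℝ)⁻¹ • ∑ i, x i)
    (z : (N : ℕ) → Fin N → EuclideanSpace ℝ (Fin d))
    (σ : ℝ → ℝ) (hσ : σ = fun u => 1 / (1 + exp (-u)))
    (L : (N : ℕ) → ℝ → EuclideanSpace ℝ (Fin d) → ℝ)
    (hLdef : ∀ N α β, L N α β =
      (∑ i, log (σ (α + ⟪β, x i - xbar⟫)))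
        + (∑ j, log (1 - σ (α + ⟪β, z N j - xbar⟫)))
        - lam / 2 * ‖β‖ ^ 2)
    (α : ℕ → ℝ)
    (hα : ∀ᶠ N : ℕ in atTop, exp (α N) ≤ C / N)
    (β : ℕ → EuclideanSpace ℝ (Fin d))
    (hmax : ∀ N, IsMaxOn (fun b => L N (α N) b) Set.univ (β N)) :
    (∀ N : ℕ, 0 < N →
      ‖β N‖ ^ 2 ≤ (2 / lam) * ((N : ℝ) * exp (α N)) * (1 + n / N)) ∧
    Filter.limsup (fun N : ℕ => ‖β N‖ ^ 2) atTop ≤ 2 * C / lam := by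
  obtain rfl : σ = sigmoid := by rw [hσ]; funext u; simp [sigmoid_def]
  have hc : ∑ i, (x i - xbar) = 0 := by simpa [hxbar] using sum_sub_inv_card_smul_sum x
  have hL : ∀ N, L N = penalizedLogitObjective lam x (z N) xbar := fun N =>
    funext₂ fun a b => hLdef N a b
  have key : ∀ N : ℕ, ‖β N‖ ^ 2 ≤ 2 / lam * ((N : ℝ) * exp (α N)) := by
    intro N
    have hb := hmax N (Set.mem_univ 0)
    simp only [hL] at hb
    have := half_mul_sq_norm_le_of_penalizedLogitObjective_zero_le lam x (z N) hc (α N) hb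
    rw [Fintype.card_fin] at this
    rw [div_mul_eq_mul_div, le_div_iff₀ hlam]
    linarith
  refine ⟨fun N _ => (key N).trans (le_mul_of_one_le_right (by positivity)
    (le_add_of_nonneg_right (by positivity))), ?_⟩
  refine limsup_le_of_le (isCoboundedUnder_le_of_le atTop fun N => sq_nonneg ‖β N‖) ?_
  filter_upwards [hα, eventually_gt_atTop 0] with N hN hN0
  have hNC : (N : ℝ) * exp (α N) ≤ C := (le_div_iff₀' (by exact_mod_cast hN0)).1 hN
  calc ‖β N‖ ^ 2 ≤ 2 / lam * ((N : ℝ) * exp (α N)) := key N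
    _ ≤ 2 / lam * C := by gcongr
    _ = 2 * C / lam := by ring
end

section
/- Let Z be an R^d-valued random variable with distribution F_0 satisfying E[‖Z‖ e^{Zᵀβ_0}] < ∞, let x̄ ∈ R^d, α_N ∈ R with A_0 = lim N e^{α_N} ∈ (0, ∞), and suppose the limiting moment identity ∫ (z - x̄) e^{zᵀβ_0} dF_0(z) = -(λ e^{x̄ᵀβ_0}/A_0) β_0 holds. Define ρ(z) = -e^{α_N - β_0ᵀx̄}(z - x̄)e^{zᵀβ_0}. Then E[ρ(Z)] = (λ e^{α_N}/A_0) β_0, and therefore √N · E[ρ(Z)] - λβ_0/√N → 0 as N → ∞. -/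
open Real MeasureTheory Filter
open scoped RealInnerProductSpace

/-!
Pulling the constant `-e^{α_N - ⟨x̄, β₀⟩}` out of the integral, the moment identity gives
`E[ρ(Z)] = (λ e^{α_N} / A₀) β₀` exactly. Both terms of the difference then vanish separately:
`√N e^{α_N} = (N e^{α_N}) / √N → A₀ · 0` and `λ / √N → 0`.
-/

theorem tendsto_inv_sqrt_natCast_atTop :
    Tendsto (fun N : ℕ => (√N)⁻¹) atTop (nhds 0) :=
  tendsto_inv_atTop_zero.comp (tendsto_sqrt_atTop.comp tendsto_natCast_atTop_atTop)

theorem tendsto_sqrt_mul_of_tendsto_natCast_mul {u : ℕ → ℝ} {A : ℝ}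
    (h : Tendsto (fun N : ℕ => (N : ℝ) * u N) atTop (nhds A)) :
    Tendsto (fun N : ℕ => √N * u N) atTop (nhds 0) := by
  have hlim := h.mul tendsto_inv_sqrt_natCast_atTop
  rw [mul_zero] at hlim
  refine hlim.congr fun N => ?_
  rw [mul_right_comm, ← div_eq_mul_inv, div_sqrt]

theorem stmt_13_general {d : ℕ} (F0 : Measure (EuclideanSpace ℝ (Fin d)))
    (β0 xbar : EuclideanSpace ℝ (Fin d)) (lam A0 : ℝ)
    (α : ℕ → ℝ)
    (hA : Tendsto (fun N : ℕ => (N : ℝ) * exp (α N)) atTop (nhds A0))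
    (hmoment : (∫ z, exp ⟪z, β0⟫ • (z - xbar) ∂F0)
      = (-(lam * exp ⟪xbar, β0⟫ / A0)) • β0)
    (ρ : ℕ → EuclideanSpace ℝ (Fin d) → EuclideanSpace ℝ (Fin d))
    (hρ : ∀ N z, ρ N z = (-(exp (α N - ⟪xbar, β0⟫) * exp ⟪z, β0⟫)) • (z - xbar)) :
    (∀ N : ℕ, (∫ z, ρ N z ∂F0) = (lam * exp (α N) / A0) • β0) ∧
    Tendsto (fun N : ℕ =>
        Real.sqrt N • (∫ z, ρ N z ∂F0) - (lam / Real.sqrt N) • β0)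
      atTop (nhds 0) := by
  have hmean (N : ℕ) : (∫ z, ρ N z ∂F0) = (lam * exp (α N) / A0) • β0 := by
    simp_rw [hρ, ← neg_mul, ← smul_smul, integral_smul, hmoment, smul_smul, exp_sub]
    congr 1
    field_simp
  refine ⟨hmean, ?_⟩
  have hpenalty := (tendsto_inv_sqrt_natCast_atTop.const_mul lam).smul_const β0
  have hscore :=
    ((tendsto_sqrt_mul_of_tendsto_natCast_mul hA).const_mul (lam / A0)).smul_const β0
  have hdiff := hscore.sub hpenalty
  simp only [mul_zero, zero_smul, sub_zero] at hdiff
  refine hdiff.congr fun N => ?_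
  rw [hmean, smul_smul, div_eq_mul_inv lam (√N)]
  ring_nf

/-- The penalty-induced mean of the linearized score: under the limiting
moment identity, `E[ρ(Z)] = (λ e^{α_N}/A₀) β₀`, and
`√N · E[ρ(Z)] - λβ₀/√N → 0`. -/
theorem stmt_13 {d : ℕ} (F0 : Measure (EuclideanSpace ℝ (Fin d)))
    [IsProbabilityMeasure F0]
    (β0 xbar : EuclideanSpace ℝ (Fin d)) (lam A0 : ℝ) (hA0 : 0 < A0)
    (α : ℕ → ℝ)
    (hA : Tendsto (fun N : ℕ => (N : ℝ) * exp (α N)) atTop (nhds A0))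
    (hint : Integrable (fun z : EuclideanSpace ℝ (Fin d) =>
      ‖z‖ * exp ⟪z, β0⟫) F0)
    (hmoment : (∫ z, exp ⟪z, β0⟫ • (z - xbar) ∂F0)
      = (-(lam * exp ⟪xbar, β0⟫ / A0)) • β0)
    (ρ : ℕ → EuclideanSpace ℝ (Fin d) → EuclideanSpace ℝ (Fin d))
    (hρ : ∀ N z, ρ N z = (-(exp (α N - ⟪xbar, β0⟫) * exp ⟪z, β0⟫)) • (z - xbar)) :
    (∀ N : ℕ, (∫ z, ρ N z ∂F0) = (lam * exp (α N) / A0) • β0) ∧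
    Tendsto (fun N : ℕ =>
        Real.sqrt N • (∫ z, ρ N z ∂F0) - (lam / Real.sqrt N) • β0)
      atTop (nhds 0) :=
  stmt_13_general F0 β0 xbar lam A0 α hA hmoment ρ hρ
end
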